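/- arXiv:1308.4919 — 3 statements merged into one kernel-verified Lean document; each statement's English description precedes it below -/
import Mathlib

section
/- Let ε > 0, T > 0, r ∈ ℝ, and let p : ℝ → ℝ have support contained in [−ε, ε]. Suppose φ : ℝ → ℝ satisfies the functional equation φ(s) = −r·p(s − T) + r·φ(s − T) for all s ∈ ℝ, and φ(s) = 0 for all s < T − ε. Then for every s ∈ ℝ, φ(s) = −Σ_{k=1}^∞ r^k p(s − kT), and this sum is finite in the sense that p(s − kT) = 0 whenever k > (s + ε)/T. -/
/-!
Unrolling the recursion `n` times gives
`φ s = -∑_{k<n} r^(k+1) p(s - (k+1)T) + r^n φ(s - nT)`.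
Once `nT > s + ε`, the remainder `φ(s - nT)` vanishes by the initial condition and every later
term of the series vanishes because `s - kT` lies left of the support of `p`, so the truncated
sum is the whole series.
-/

open Function Set

lemma eq_zero_of_lt_of_support_subset_Icc {p : ℝ → ℝ} {a b x : ℝ}
    (hsupp : support p ⊆ Icc a b) (hx : x < a) : p x = 0 :=
  notMem_support.mp fun hmem => (hsupp hmem).1.not_gt hx

lemma sub_mul_lt_neg_of_div_lt {s ε T : ℝ} {k : ℝ} (hT : 0 < T) (hk : (s + ε) / T < k) :
    s - k * T < -ε := by
  have := (div_lt_iff₀ hT).mp hk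
  linarith

lemma eq_neg_sum_add_pow_mul_of_forall_eq {R : Type*} [CommRing R] {p φ : ℝ → R} {T : ℝ} {r : R}
    (hrec : ∀ s, φ s = -r * p (s - T) + r * φ (s - T)) (s : ℝ) (n : ℕ) :
    φ s = -(∑ k ∈ Finset.range n, r ^ (k + 1) * p (s - (k + 1) * T)) + r ^ n * φ (s - n * T) := by
  induction n with
  | zero => simp
  | succ n ih =>
    have hshift : s - n * T - T = s - (n + 1 : ℕ) * T := by push_cast; ring
    rw [ih, hrec (s - n * T), hshift, Finset.sum_range_succ]
    push_cast
    ring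

theorem left_moving_wave_series_general
    (ε T r : ℝ) (hT : 0 < T)
    (p φ : ℝ → ℝ)
    (hsupp : Function.support p ⊆ Set.Icc (-ε) ε)
    (hrec : ∀ s : ℝ, φ s = -r * p (s - T) + r * φ (s - T))
    (hzero : ∀ s : ℝ, s < T - ε → φ s = 0) :
    ∀ s : ℝ,
      (φ s = -∑' k : ℕ, r ^ (k + 1) * p (s - (k + 1) * T)) ∧
      (∀ k : ℕ, (s + ε) / T < (k : ℝ) → p (s - k * T) = 0) := by
  intro s
  have hvanish : ∀ k : ℕ, (s + ε) / T < (k : ℝ) → p (s - k * T) = 0 := fun k hk =>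
    eq_zero_of_lt_of_support_subset_Icc hsupp (sub_mul_lt_neg_of_div_lt hT hk)
  refine ⟨?_, hvanish⟩
  obtain ⟨n, hn⟩ := exists_nat_gt ((s + ε) / T)
  have hremainder : φ (s - n * T) = 0 :=
    hzero _ (by linarith [sub_mul_lt_neg_of_div_lt hT hn])
  have htsum : ∑' k : ℕ, r ^ (k + 1) * p (s - (k + 1) * T) =
      ∑ k ∈ Finset.range n, r ^ (k + 1) * p (s - (k + 1) * T) := by
    refine tsum_eq_sum fun k hk => ?_
    have hnk : (n : ℝ) ≤ k := by exact_mod_cast not_lt.mp (Finset.mem_range.not.mp hk)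
    have hterm := hvanish (k + 1) (by push_cast; linarith)
    push_cast at hterm
    rw [hterm, mul_zero]
  rw [htsum, eq_neg_sum_add_pow_mul_of_forall_eq hrec s n, hremainder, mul_zero, add_zero]

/-- The left-moving wave profile: if `φ(s) = −r·p(s−T) + r·φ(s−T)` for all `s`, `φ`
vanishes on `(−∞, T−ε)`, and `p` is supported in `[−ε, ε]`, then
`φ(s) = −Σ_{k=1}^∞ r^k p(s − kT)`, the sum being finite since `p(s − kT) = 0` once
`k > (s + ε)/T`. -/
theorem left_moving_wave_series
    (ε T r : ℝ) (hε : 0 < ε) (hT : 0 < T)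
    (p φ : ℝ → ℝ)
    (hsupp : Function.support p ⊆ Set.Icc (-ε) ε)
    (hrec : ∀ s : ℝ, φ s = -r * p (s - T) + r * φ (s - T))
    (hzero : ∀ s : ℝ, s < T - ε → φ s = 0) :
    ∀ s : ℝ,
      (φ s = -∑' k : ℕ, r ^ (k + 1) * p (s - (k + 1) * T)) ∧
      (∀ k : ℕ, (s + ε) / T < (k : ℝ) → p (s - k * T) = 0) :=
  left_moving_wave_series_general ε T r hT p φ hsupp hrec hzero
end

section
/- Let p : ℝ → ℝ be compactly supported, let c_+ > 0 > c_−, let N > 0, and set r = c_−/c_+ and T = (1/c_+ − 1/c_−)·N (note T > 0). Define ψ(s) = Σ_{k=0}^∞ r^k p(s − kT) and φ(s) = −Σ_{k=1}^∞ r^k p(s − kT) (both sums have only finitely many nonzero terms at each s). Then for all t ∈ ℝ: (i) ψ(t) + φ(t) = p(t) (the prescribed right boundary condition at agent 0), and (ii) c_−·ψ(t − N/c_+) + c_+·φ(t − N/c_−) = 0 (the free left boundary condition at agent N). -/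
/-!
Since `p` has compact support and `T ≠ 0`, both series have finitely many nonzero terms.
Reindexing gives `φ (s + T) = -r * ψ s`, and the two arrival times at agent `N` differ by
exactly one round trip: `(t - N / c₋) - (t - N / c₊) = T`. With `c₊ r = c₋` the boundary
terms at agent `N` then cancel, while at agent `0` the series for `φ` is the tail of that for `ψ`.
-/

open Filter

theorem HasCompactSupport.eventually_comp_sub_natCast_mul_eq_zero {M : Type*} [Zero M]
    {p : ℝ → M} (hp : HasCompactSupport p) {T : ℝ} (hT : T ≠ 0) (s : ℝ) :
    ∀ᶠ k : ℕ in cofinite, p (s - k * T) = 0 := by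
  have hdist : Tendsto (fun k : ℕ => dist (s - k * T) s) atTop atTop := by
    simpa [Real.dist_eq, abs_mul] using
      tendsto_natCast_atTop_atTop.atTop_mul_const (abs_pos.2 hT)
  rw [Nat.cofinite_eq_atTop]
  rw [hasCompactSupport_iff_eventuallyEq, coclosedCompact_eq_cocompact] at hp
  exact (tendsto_cocompact_of_tendsto_dist_comp_atTop s hdist).eventually hp

theorem summable_mul_comp_sub_natCast_mul {R : Type*} [NonUnitalNonAssocSemiring R]
    [TopologicalSpace R] {p : ℝ → R} (hp : HasCompactSupport p) {T : ℝ} (hT : T ≠ 0)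
    (a : ℕ → R) (s : ℝ) : Summable fun k : ℕ => a k * p (s - k * T) :=
  summable_of_hasFiniteSupport <| eventually_cofinite.1 <|
    (hp.eventually_comp_sub_natCast_mul_eq_zero hT s).mono fun k hk => by simp [hk]

/-- The reflection series `ψ(s) = Σ_{k=0}^∞ r^k p(s − kT)` and
`φ(s) = −Σ_{k=1}^∞ r^k p(s − kT)`, with `r = c_−/c_+` and `T = (1/c_+ − 1/c_−)N`,
satisfy the prescribed right boundary condition `ψ(t) + φ(t) = p(t)` and the free
left boundary condition `c_−ψ(t − N/c_+) + c_+φ(t − N/c_−) = 0`. -/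
theorem reflection_series_boundary_conditions
    (p : ℝ → ℝ) (hp : HasCompactSupport p)
    (cplus cminus N : ℝ) (hcp : 0 < cplus) (hcm : cminus < 0) (hN : 0 < N)
    (r T : ℝ) (hr : r = cminus / cplus) (hT : T = (1 / cplus - 1 / cminus) * N)
    (ψ φ : ℝ → ℝ)
    (hψ : ∀ s : ℝ, ψ s = ∑' k : ℕ, r ^ k * p (s - k * T))
    (hφ : ∀ s : ℝ, φ s = -∑' k : ℕ, r ^ (k + 1) * p (s - (k + 1) * T)) :
    (∀ t : ℝ, ψ t + φ t = p t) ∧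
    (∀ t : ℝ, cminus * ψ (t - N / cplus) + cplus * φ (t - N / cminus) = 0) := by
  have hT_pos : 0 < T := by
    rw [hT]
    exact mul_pos (sub_pos.2 ((one_div_neg.2 hcm).trans (one_div_pos.2 hcp))) hN
  have hsum := summable_mul_comp_sub_natCast_mul hp hT_pos.ne' (r ^ ·)
  have hφ_shift (s : ℝ) : φ (s + T) = -r * ψ s := by
    rw [hφ, hψ, neg_mul, ← tsum_mul_left]
    congr! 2 with k
    ring_nf
  refine ⟨fun t => ?_, fun t => ?_⟩
  · rw [hψ, hφ, (hsum t).tsum_eq_zero_add]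
    simp
  · have hdelay : t - N / cminus = t - N / cplus + T := by
      rw [hT]
      field_simp
      ring
    rw [hdelay, hφ_shift, hr]
    field_simp
    ring
end

section
/- Fix g_x < 0, g_v < 0, r ∈ (−1, 0), and N ≥ 2. Consider the 2N-dimensional linear system for (z₁,…,z_N, ż₁,…,ż_N) given by: z̈_k = g_x[(−1−r)z_{k−1} + z_k + r·z_{k+1}] + g_v[(−1−r)ż_{k−1} + ż_k + r·ż_{k+1}] for k ∈ {1,…,N−1} (with z₀ ≡ 0 and ż₀ ≡ 0), and the regular boundary condition z̈_N = g_x(z_N − z_{N−1}) + g_v(ż_N − ż_{N−1}). Then this system is asymptotically stable: every eigenvalue of its 2N × 2N coefficient matrix has strictly negative real part. -/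
/-!
An eigenvector `(x, y)` of the block matrix has `y = μ x` and `(g_x + g_v μ) L x = μ² x`, so
`ν = μ² / (g_x + g_v μ)` is an eigenvalue of `L` and `μ² - g_v ν μ - g_x ν = 0`. Once `ν` is known
to be a positive real, this quadratic has positive coefficients, so `Re μ < 0`.

Positivity of the eigenvalues of `L`: a positive diagonal `D` makes `S = D L` symmetric, and for a
real symmetric `S` the form `x* S x` equals the Dirichlet energy
`∑ᵢ (∑ⱼ Sᵢⱼ) |xᵢ|² + ½ ∑ᵢⱼ (-Sᵢⱼ) |xᵢ - xⱼ|²`. Here `S` has nonpositive off-diagonal entries,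
nonnegative row sums, a positive row sum at the agent next to the leader, and negative entries along
the chain `i ~ i + 1`; so the energy of `x ≠ 0` is positive, and `ν ∑ᵢ Dᵢ |xᵢ|² = x* S x > 0`.
-/

open Matrix

theorem Complex.re_neg_of_sq_add_mul_add_eq_zero {b c : ℝ} (hb : 0 < b) (hc : 0 < c) {μ : ℂ}
    (h : μ ^ 2 + b * μ + c = 0) : μ.re < 0 := by
  have hre := congrArg Complex.re h
  have him := congrArg Complex.im h
  simp only [sq, Complex.add_re, Complex.mul_re, Complex.ofReal_re, Complex.ofReal_im,
    Complex.add_im, Complex.mul_im, Complex.zero_re, Complex.zero_im] at hre him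
  by_contra! hμ
  have him0 : μ.im = 0 := by
    have : μ.im * (2 * μ.re + b) = 0 := by linarith
    exact (mul_eq_zero.mp this).resolve_right (by linarith)
  rw [him0] at hre
  nlinarith

theorem Fin.sum_ite_val_eq {M : Type*} [AddCommMonoid M] (n k : ℕ) (c : M) :
    ∑ j : Fin n, (if (j : ℕ) = k then c else 0) = if k < n then c else 0 := by
  simp [Fin.sum_univ_eq_sum_range (fun m => if m = k then c else 0)]

theorem Fin.apply_zero_ne_or_exists_ne_of_ne_zero {α : Type*} [Zero α] {N : ℕ} (hN : 0 < N)
    {x : Fin N → α} (hx : x ≠ 0) : x ⟨0, hN⟩ ≠ 0 ∨ ∃ i j : Fin N, (j : ℕ) = i + 1 ∧ x i ≠ x j := by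
  by_contra! h
  obtain ⟨h₀, hsucc⟩ := h
  refine hx (funext fun ⟨k, hk⟩ => ?_)
  induction k with
  | zero => exact h₀
  | succ k ih => exact (hsucc ⟨k, by omega⟩ ⟨k + 1, hk⟩ rfl).symm.trans (ih (by omega))

namespace Matrix

variable {n : Type*} [Fintype n]

theorem exists_mulVec_eq_smul_of_mem_spectrum {K : Type*} [Field K] [DecidableEq n]
    {A : Matrix n n K} {μ : K} (h : μ ∈ spectrum K A) :
    ∃ v ≠ 0, A *ᵥ v = μ • v := by
  rw [← spectrum_toLin', ← Module.End.hasEigenvalue_iff_mem_spectrum] at h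
  obtain ⟨v, hv⟩ := h.exists_hasEigenvector
  exact ⟨v, hv.2, by simpa using hv.apply_eq_smul⟩

theorem exists_sq_smul_eq_of_mulVec_fromBlocks {K : Type*} [Field K] [DecidableEq n]
    {L : Matrix n n K} {a b μ : K} {v : n ⊕ n → K} (hv : v ≠ 0)
    (h : fromBlocks 0 1 (a • L) (b • L) *ᵥ v = μ • v) :
    ∃ x ≠ 0, (a + b * μ) • (L *ᵥ x) = μ ^ 2 • x := by
  rw [fromBlocks_mulVec] at h
  have htop : v ∘ Sum.inr = μ • v ∘ Sum.inl := by
    ext i; simpa using congrFun h (Sum.inl i)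
  have hbot : a • (L *ᵥ v ∘ Sum.inl) + b • (L *ᵥ v ∘ Sum.inr) = μ • v ∘ Sum.inr := by
    ext i; simpa [smul_mulVec] using congrFun h (Sum.inr i)
  refine ⟨v ∘ Sum.inl, fun hx => hv ?_, ?_⟩
  · ext (i | i)
    · exact congrFun hx i
    · simpa [hx] using congrFun htop i
  · rw [htop, mulVec_smul, smul_smul, smul_smul, ← sq] at hbot
    rw [add_smul, ← hbot, mul_smul]

open scoped ComplexOrder in
theorem re_neg_of_mem_spectrum_fromBlocks [DecidableEq n] {L : Matrix n n ℝ} {a b : ℝ}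
    (ha : a < 0) (hb : b < 0)
    (hL : ∀ (ν : ℂ) (x : n → ℂ), x ≠ 0 → L.map (algebraMap ℝ ℂ) *ᵥ x = ν • x → 0 < ν) {μ : ℂ}
    (hμ : μ ∈ spectrum ℂ ((fromBlocks 0 (1 : Matrix n n ℝ) (a • L) (b • L)).map (algebraMap ℝ ℂ))) :
    μ.re < 0 := by
  obtain ⟨v, hv, hvμ⟩ := exists_mulVec_eq_smul_of_mem_spectrum hμ
  have hmap : (fromBlocks 0 (1 : Matrix n n ℝ) (a • L) (b • L)).map (algebraMap ℝ ℂ) =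
      fromBlocks 0 1 ((a : ℂ) • L.map (algebraMap ℝ ℂ)) ((b : ℂ) • L.map (algebraMap ℝ ℂ)) := by
    ext (i | i) (j | j) <;> simp [one_apply, apply_ite]
  rw [hmap] at hvμ
  obtain ⟨x, hx, hxμ⟩ := exists_sq_smul_eq_of_mulVec_fromBlocks hv hvμ
  set c : ℂ := a + b * μ
  have hc : c ≠ 0 := by
    rintro hc
    have hμ0 : μ = 0 := by simpa [hc, hx] using hxμ.symm
    simp [c, hμ0, ha.ne] at hc
  obtain ⟨hℓ, hℓim⟩ := Complex.pos_iff.mp <| hL (μ ^ 2 / c) x hx <| by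
    rw [div_eq_inv_mul, mul_smul, ← hxμ, smul_smul, inv_mul_cancel₀ hc, one_smul]
  set ℓ := (μ ^ 2 / c).re
  have hμc : μ ^ 2 = c * ℓ := by
    have hν : μ ^ 2 / c = ℓ := Complex.ext rfl hℓim.symm
    rw [← hν, mul_div_cancel₀ _ hc]
  refine Complex.re_neg_of_sq_add_mul_add_eq_zero (b := -(b * ℓ)) (c := -(a * ℓ))
    (neg_pos.mpr (mul_neg_of_neg_of_pos hb hℓ)) (neg_pos.mpr (mul_neg_of_neg_of_pos ha hℓ)) ?_
  push_cast
  linear_combination hμc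

noncomputable def dirichletEnergy (S : Matrix n n ℝ) (x : n → ℂ) : ℝ :=
  ∑ i, (∑ j, S i j) * Complex.normSq (x i) - (∑ i, ∑ j, S i j * Complex.normSq (x i - x j)) / 2

theorem IsSymm.sum_sum_mul_comm {S : Matrix n n ℝ} (hS : S.IsSymm) (f : n → n → ℝ) :
    ∑ i, ∑ j, S i j * f i j = ∑ i, ∑ j, S i j * f j i := by
  rw [Finset.sum_comm]
  simp_rw [hS.apply]

theorem IsSymm.star_dotProduct_map_mulVec {S : Matrix n n ℝ} (hS : S.IsSymm) (x : n → ℂ) :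
    star x ⬝ᵥ (S.map (algebraMap ℝ ℂ) *ᵥ x) = S.dirichletEnergy x := by
  have hsum : star x ⬝ᵥ (S.map (algebraMap ℝ ℂ) *ᵥ x) =
      ∑ i, ∑ j, S i j * (star (x i) * x j) := by
    simp only [dotProduct, mulVec, Finset.mul_sum, map_apply, Complex.coe_algebraMap, Pi.star_apply]
    exact Finset.sum_congr rfl fun i _ => Finset.sum_congr rfl fun j _ => by ring
  rw [hsum]
  apply Complex.ext
  · have hdiff : ∑ i, ∑ j, S i j * Complex.normSq (x i - x j) =
        ∑ i, ∑ j, S i j * Complex.normSq (x i) + ∑ i, ∑ j, S i j * Complex.normSq (x j) -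
          2 * ∑ i, ∑ j, S i j * (star (x i) * x j).re := by
      simp only [Finset.mul_sum, ← Finset.sum_add_distrib, ← Finset.sum_sub_distrib]
      refine Finset.sum_congr rfl fun i _ => Finset.sum_congr rfl fun j _ => ?_
      simp only [Complex.normSq_apply, Complex.mul_re, Complex.sub_re, Complex.sub_im,
        Complex.star_def, Complex.conj_re, Complex.conj_im]
      ring
    rw [hS.sum_sum_mul_comm fun i j => Complex.normSq (x j)] at hdiff
    simp only [dirichletEnergy, Complex.ofReal_re, Complex.re_sum, Complex.re_ofReal_mul,
      Finset.sum_mul]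
    linarith
  · have hanti : ∀ i j, (star (x i) * x j).im = (x i).re * (x j).im - (x j).re * (x i).im := by
      intro i j
      simp only [Complex.mul_im, Complex.star_def, Complex.conj_re, Complex.conj_im]
      ring
    simp only [Complex.ofReal_im, Complex.im_sum, Complex.im_ofReal_mul, hanti, mul_sub,
      Finset.sum_sub_distrib]
    rw [hS.sum_sum_mul_comm fun i j => (x j).re * (x i).im, sub_self]

theorem dirichletEnergy_pos {S : Matrix n n ℝ} (hoff : ∀ i j, i ≠ j → S i j ≤ 0)
    (hrow : ∀ i, 0 ≤ ∑ j, S i j) {x : n → ℂ}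
    (hx : (∃ i, 0 < ∑ j, S i j ∧ x i ≠ 0) ∨ ∃ i j, S i j < 0 ∧ x i ≠ x j) :
    0 < S.dirichletEnergy x := by
  have hterm : ∀ i j, S i j * Complex.normSq (x i - x j) ≤ 0 := by
    intro i j
    rcases eq_or_ne i j with rfl | hij
    · simp
    · exact mul_nonpos_of_nonpos_of_nonneg (hoff i j hij) (Complex.normSq_nonneg _)
  have hdiag : 0 ≤ ∑ i, (∑ j, S i j) * Complex.normSq (x i) :=
    Finset.sum_nonneg fun i _ => mul_nonneg (hrow i) (Complex.normSq_nonneg _)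
  have hedge : ∑ i, ∑ j, S i j * Complex.normSq (x i - x j) ≤ 0 :=
    Finset.sum_nonpos fun i _ => Finset.sum_nonpos fun j _ => hterm i j
  unfold dirichletEnergy
  rcases hx with ⟨i, hi, hxi⟩ | ⟨i, j, hij, hxij⟩
  · have : 0 < ∑ i, (∑ j, S i j) * Complex.normSq (x i) :=
      Finset.sum_pos' (fun i _ => mul_nonneg (hrow i) (Complex.normSq_nonneg _))
        ⟨i, Finset.mem_univ _, mul_pos hi (Complex.normSq_pos.mpr hxi)⟩
    linarith
  · have : ∑ i, ∑ j, S i j * Complex.normSq (x i - x j) < 0 :=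
      Finset.sum_neg' (fun i _ => Finset.sum_nonpos fun j _ => hterm i j)
        ⟨i, Finset.mem_univ _, Finset.sum_neg' (fun j _ => hterm i j) ⟨j, Finset.mem_univ _,
          mul_neg_of_neg_of_pos hij (Complex.normSq_pos.mpr (sub_ne_zero.mpr hxij))⟩⟩
    linarith

open scoped ComplexOrder in
theorem eigenvalue_pos_of_isSymm_diagonal_mul [DecidableEq n] {A : Matrix n n ℝ} {p : n → ℝ}
    (hp : ∀ i, 0 < p i) (hS : (diagonal p * A).IsSymm) {ν : ℂ} {x : n → ℂ} (hx : x ≠ 0)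
    (hν : A.map (algebraMap ℝ ℂ) *ᵥ x = ν • x) (hE : 0 < (diagonal p * A).dirichletEnergy x) :
    0 < ν := by
  set P := ∑ i, p i * Complex.normSq (x i)
  have hP : 0 < P := by
    obtain ⟨i, hi⟩ := Function.ne_iff.mp hx
    exact Finset.sum_pos' (fun i _ => mul_nonneg (hp i).le (Complex.normSq_nonneg _))
      ⟨i, Finset.mem_univ _, mul_pos (hp i) (Complex.normSq_pos.mpr hi)⟩
  have hνP : ν * P = (diagonal p * A).dirichletEnergy x := by
    rw [← hS.star_dotProduct_map_mulVec, Matrix.map_mul, diagonal_map (map_zero _),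
      ← mulVec_mulVec, hν]
    simp only [dotProduct, mulVec_diagonal, P, Complex.ofReal_sum, Finset.mul_sum]
    refine Finset.sum_congr rfl fun i _ => ?_
    simp only [Complex.ofReal_mul, Complex.normSq_eq_conj_mul_self, Pi.star_apply,
      Complex.star_def, Complex.coe_algebraMap, Pi.smul_apply, smul_eq_mul]
    ring
  rw [← eq_div_iff (by exact_mod_cast hP.ne')] at hνP
  rw [hνP, ← Complex.ofReal_div, Complex.zero_lt_real]
  exact div_pos hE hP

end Matrix

section LeaderFollower

def leaderFollowerMatrix (N : ℕ) (r : ℝ) : Matrix (Fin N) (Fin N) ℝ :=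
  of fun i j =>
    if (i : ℕ) = N - 1 then
      (if j = i then 1 else if (j : ℕ) + 1 = (i : ℕ) then -1 else 0)
    else
      (if j = i then 1
       else if (j : ℕ) = (i : ℕ) + 1 then r
       else if (j : ℕ) + 1 = (i : ℕ) then -1 - r
       else 0)

variable {N : ℕ} {r : ℝ}

theorem leaderFollowerMatrix_apply (i j : Fin N) :
    leaderFollowerMatrix N r i j =
      (if j = i then 1 else 0) + (if (j : ℕ) = i + 1 then r else 0) +
        (if (j : ℕ) + 1 = i then (if (i : ℕ) = N - 1 then -1 else -1 - r) else 0) := by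
  simp only [leaderFollowerMatrix, of_apply]
  split_ifs <;> simp_all [Fin.ext_iff] <;> omega

theorem sum_leaderFollowerMatrix_apply (hN : 2 ≤ N) (i : Fin N) :
    ∑ j, leaderFollowerMatrix N r i j = if (i : ℕ) = 0 then 1 + r else 0 := by
  have hpred : ∀ j : Fin N, (j : ℕ) + 1 = i ↔ (j : ℕ) = i - 1 ∧ (i : ℕ) ≠ 0 := by omega
  simp only [leaderFollowerMatrix_apply, Finset.sum_add_distrib, Finset.sum_ite_eq',
    Finset.mem_univ, if_true, Fin.sum_ite_val_eq, hpred, ite_and]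
  have := i.isLt
  split_ifs <;> first | (exfalso; omega) | ring

/-- Solving `p k * L k (k + 1) = p (k + 1) * L (k + 1) k` for `p` gives the ratio `-r / (1 + r)`;
the factor `1 + r` on the last agent compensates its subdiagonal entry `-1` instead of `-1 - r`. -/
noncomputable def leaderFollowerWeight (N : ℕ) (r : ℝ) (k : Fin N) : ℝ :=
  (if (k : ℕ) = N - 1 then 1 + r else 1) * (-r / (1 + r)) ^ (k : ℕ)

theorem leaderFollowerWeight_mul_apply_comm (hr : 1 + r ≠ 0) {i j : Fin N} (hij : (i : ℕ) < j) :
    leaderFollowerWeight N r i * leaderFollowerMatrix N r i j =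
      leaderFollowerWeight N r j * leaderFollowerMatrix N r j i := by
  have hj := j.isLt
  simp only [leaderFollowerMatrix_apply, leaderFollowerWeight, Fin.ext_iff]
  obtain hsucc | hfar := eq_or_ne (j : ℕ) (i + 1)
  · rw [hsucc, pow_succ]
    simp only [if_neg (by omega : (i : ℕ) ≠ N - 1), if_neg (by omega : (i : ℕ) + 1 ≠ i)]
    split_ifs <;> first | (exfalso; omega) | (field_simp; ring)
  · simp only [if_neg hij.ne', if_neg hij.ne, if_neg hfar, if_neg (by omega : (j : ℕ) + 1 ≠ i),
      if_neg (by omega : (i : ℕ) ≠ j + 1)]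
    split_ifs <;> first | (exfalso; omega) | ring

theorem isSymm_diagonal_leaderFollowerWeight_mul (hr : 1 + r ≠ 0) :
    (diagonal (leaderFollowerWeight N r) * leaderFollowerMatrix N r).IsSymm := by
  refine IsSymm.ext fun i j => ?_
  simp only [diagonal_mul]
  rcases lt_trichotomy (i : ℕ) j with h | h | h
  · exact (leaderFollowerWeight_mul_apply_comm hr h).symm
  · rw [Fin.ext h]
  · exact leaderFollowerWeight_mul_apply_comm hr h

theorem leaderFollowerWeight_pos (hr : r ∈ Set.Ioo (-1 : ℝ) 0) (k : Fin N) :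
    0 < leaderFollowerWeight N r k := by
  obtain ⟨hr₁, hr₂⟩ := hr
  have hq : 0 < -r / (1 + r) := div_pos (by linarith) (by linarith)
  unfold leaderFollowerWeight
  split_ifs
  · exact mul_pos (by linarith) (pow_pos hq _)
  · exact mul_pos one_pos (pow_pos hq _)

theorem leaderFollowerMatrix_apply_nonpos (hr : r ∈ Set.Ioo (-1 : ℝ) 0) {i j : Fin N}
    (hij : i ≠ j) : leaderFollowerMatrix N r i j ≤ 0 := by
  obtain ⟨hr₁, hr₂⟩ := hr
  rw [leaderFollowerMatrix_apply, if_neg hij.symm]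
  split_ifs <;> linarith

open scoped ComplexOrder in
theorem leaderFollowerMatrix_eigenvalue_pos (hr : r ∈ Set.Ioo (-1 : ℝ) 0) (hN : 2 ≤ N) {ν : ℂ}
    {x : Fin N → ℂ} (hx : x ≠ 0)
    (hν : (leaderFollowerMatrix N r).map (algebraMap ℝ ℂ) *ᵥ x = ν • x) : 0 < ν := by
  have hp : ∀ k, 0 < leaderFollowerWeight N r k := leaderFollowerWeight_pos hr
  have hrow : ∀ i, ∑ j, (diagonal (leaderFollowerWeight N r) * leaderFollowerMatrix N r) i j =
      leaderFollowerWeight N r i * if (i : ℕ) = 0 then 1 + r else 0 := fun i => by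
    simp only [diagonal_mul, ← Finset.mul_sum, sum_leaderFollowerMatrix_apply hN]
  refine eigenvalue_pos_of_isSymm_diagonal_mul hp
    (isSymm_diagonal_leaderFollowerWeight_mul (by linarith [hr.1])) hx hν
    (dirichletEnergy_pos (fun i j hij => ?_) (fun i => ?_) ?_)
  · rw [diagonal_mul]
    exact mul_nonpos_of_nonneg_of_nonpos (hp i).le (leaderFollowerMatrix_apply_nonpos hr hij)
  · rw [hrow]
    split_ifs
    · exact mul_nonneg (hp i).le (by linarith [hr.1])
    · rw [mul_zero]
  · obtain hx₀ | ⟨i, j, hij, hxij⟩ := Fin.apply_zero_ne_or_exists_ne_of_ne_zero (by omega) hx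
    · refine .inl ⟨⟨0, by omega⟩, ?_, hx₀⟩
      rw [hrow, if_pos rfl]
      exact mul_pos (hp _) (by linarith [hr.1])
    · refine .inr ⟨i, j, ?_, hxij⟩
      rw [diagonal_mul, leaderFollowerMatrix_apply, if_neg (by omega), if_pos hij,
        if_neg (by omega)]
      simpa using mul_neg_of_pos_of_neg (hp i) hr.2

end LeaderFollower

/-- Asymptotic stability of the leader-follower array `S_N` with regular boundary
conditions: for `g_x < 0`, `g_v < 0`, `r ∈ (−1, 0)` and `N ≥ 2`, every eigenvalue of
the `2N × 2N` coefficient matrix of the first-order system for `(z₁,…,z_N,ż₁,…,ż_N)`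
(interior agents `z̈_k = g_x[(−1−r)z_{k−1} + z_k + r z_{k+1}] + g_v[(−1−r)ż_{k−1} +
ż_k + r ż_{k+1}]` with `z₀ ≡ 0`, last agent `z̈_N = g_x(z_N − z_{N−1}) +
g_v(ż_N − ż_{N−1})`) has strictly negative real part. -/
theorem leader_follower_asymptotic_stability
    (gx gv r : ℝ) (hgx : gx < 0) (hgv : gv < 0)
    (hr : r ∈ Set.Ioo (-1 : ℝ) 0)
    (N : ℕ) (hN : 2 ≤ N)
    (L : Matrix (Fin N) (Fin N) ℝ)
    (hL : ∀ i j : Fin N,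
      L i j =
        if (i : ℕ) = N - 1 then
          -- last agent (agent N): z_N − z_{N−1}
          (if j = i then 1 else if (j : ℕ) + 1 = (i : ℕ) then -1 else 0)
        else
          -- interior agent k = i+1: (−1−r) z_{k−1} + z_k + r z_{k+1}, with z₀ ≡ 0
          (if j = i then 1
           else if (j : ℕ) = (i : ℕ) + 1 then r
           else if (j : ℕ) + 1 = (i : ℕ) then -1 - r
           else 0))
    (M : Matrix (Fin N ⊕ Fin N) (Fin N ⊕ Fin N) ℝ)
    (hM : M = Matrix.fromBlocks 0 1 (gx • L) (gv • L)) :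
    ∀ μ : ℂ, μ ∈ spectrum ℂ (M.map (algebraMap ℝ ℂ)) → μ.re < 0 := by
  intro μ hμ
  obtain rfl : L = leaderFollowerMatrix N r := Matrix.ext hL
  subst hM
  exact re_neg_of_mem_spectrum_fromBlocks hgx hgv
    (fun _ _ hx hν => leaderFollowerMatrix_eigenvalue_pos hr hN hx hν) hμ
end
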